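/- (Lemma: expected work in the i-th iteration.) Let P ⊆ U be a finite set of n distinct points, let π : {1, …, n} → P be a uniformly random bijection, and for 0 ≤ j ≤ n set P_j = {π(1), …, π(j)}. Then for every 1 ≤ i ≤ n, the expected value of the sum, over all tiles f that belong to QT(P_i) but not to QT(P_{i−1}), of |P ∩ f| is at most 4n / i. -/

import Mathlib

/-- The unit square `U = [0,1) × [0,1)`. -/
def unitSq : Set (ℝ × ℝ) := Set.Ico (0 : ℝ) 1 ×ˢ Set.Ico (0 : ℝ) 1

/-- The square `[i/2^k, (i+1)/2^k) × [j/2^k, (j+1)/2^k)`. -/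
def canSq (k : ℕ) (i j : ℤ) : Set (ℝ × ℝ) :=
  Set.Ico ((i : ℝ) / 2 ^ k) (((i : ℝ) + 1) / 2 ^ k) ×ˢ
    Set.Ico ((j : ℝ) / 2 ^ k) (((j : ℝ) + 1) / 2 ^ k)

/-- `σ` is a canonical square of side length `2⁻ᵏ`: it has the form
`[i/2^k, (i+1)/2^k) × [j/2^k, (j+1)/2^k)` with `0 ≤ i, j < 2^k`
(so it is contained in the unit square). -/
def IsCanSqSide (k : ℕ) (σ : Set (ℝ × ℝ)) : Prop :=
  ∃ i j : ℤ, 0 ≤ i ∧ i < 2 ^ k ∧ 0 ≤ j ∧ j < 2 ^ k ∧ σ = canSq k i j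

/-- `σ` is a canonical square. -/
def IsCanSq (σ : Set (ℝ × ℝ)) : Prop := ∃ k : ℕ, IsCanSqSide k σ

/-- `q` is one of the four quadrants of the canonical square `σ`: if `σ` has side
length `2⁻ᵏ`, the quadrants are the canonical squares of side length `2⁻⁽ᵏ⁺¹⁾`
contained in `σ`. -/
def IsQuadrantOf (q σ : Set (ℝ × ℝ)) : Prop :=
  ∃ k : ℕ, IsCanSqSide k σ ∧ IsCanSqSide (k + 1) q ∧ q ⊆ σ

/-- `σ` is the smallest canonical square containing `S`: it is a canonical square,
it contains `S`, and it is contained in every canonical square containing `S`. -/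
def IsSmallestCanSq (S σ : Set (ℝ × ℝ)) : Prop :=
  IsCanSq σ ∧ S ⊆ σ ∧ ∀ τ : Set (ℝ × ℝ), IsCanSq τ → S ⊆ τ → σ ⊆ τ

open scoped Classical

/-- `smallestCanSq S`: the smallest canonical square containing `S` (junk value `∅` if none exists). -/
noncomputable def smallestCanSq (S : Set (ℝ × ℝ)) : Set (ℝ × ℝ) :=
  if h : ∃ σ : Set (ℝ × ℝ), IsSmallestCanSq S σ then h.choose else ∅

/-- A canonical square `σ` is critical for `P` if at least two of its four
quadrants contain a point of `P`. -/
def Critical (P σ : Set (ℝ × ℝ)) : Prop :=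
  IsCanSq σ ∧ ∃ q₁ q₂ : Set (ℝ × ℝ), IsQuadrantOf q₁ σ ∧ IsQuadrantOf q₂ σ ∧
    q₁ ≠ q₂ ∧ (P ∩ q₁).Nonempty ∧ (P ∩ q₂).Nonempty

/-- The tiles of the compressed quadtree map `QT(P)`: (i) `U` itself if `|P| ≤ 1`;
(ii) the annulus `U \ sq(P)` if `|P| ≥ 2` and `sq(P) ≠ U`; (iii) for every
canonical square `σ` critical for `P` and every quadrant `q` of `σ`: the square
`q` if `|P ∩ q| ≤ 1`, and the annulus `q \ sq(P ∩ q)` if `|P ∩ q| ≥ 2` and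
`sq(P ∩ q) ≠ q`. -/
noncomputable def QT (P : Set (ℝ × ℝ)) : Set (Set (ℝ × ℝ)) :=
  {f | (P.ncard ≤ 1 ∧ f = unitSq)
    ∨ (2 ≤ P.ncard ∧ smallestCanSq P ≠ unitSq ∧ f = unitSq \ smallestCanSq P)
    ∨ (∃ σ q : Set (ℝ × ℝ), Critical P σ ∧ IsQuadrantOf q σ ∧
        (((P ∩ q).ncard ≤ 1 ∧ f = q)
          ∨ (2 ≤ (P ∩ q).ncard ∧ smallestCanSq (P ∩ q) ≠ q ∧ f = q \ smallestCanSq (P ∩ q))))}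

/-- `P_j = {π(1), …, π(j)}`: the set of the first `j` points of `P` in the
random order `π : {1, …, n} → P` (modelled as `π : Fin n ≃ P`, with index
`t : Fin n` corresponding to position `t + 1`). -/
def prefixSet (n : ℕ) (P : Finset (ℝ × ℝ)) (π : Fin n ≃ {x // x ∈ P}) (j : ℕ) :
    Set (ℝ × ℝ) :=
  {x : ℝ × ℝ | ∃ t : Fin n, (t : ℕ) < j ∧ ((π t : {x // x ∈ P}) : ℝ × ℝ) = x}

/-! Backwards analysis. Given the set `P_i`, the point `π(i)` is a uniformly random point of
`P_i`, and the work of step `i` is the weight of the tiles of `QT(P_i)` that are not tiles of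
`QT(P_i \ {π(i)})`. Each tile of `QT(S)` has a defining set of at most four points of `S`
(two witnessing that the parent square is critical, two spanning the square cut out of the
cell), and it survives the deletion of any other point. The tiles of `QT(S)` are pairwise
disjoint, so their weights `|P ∩ f|` add up to at most `n`. Summing over the `i` choices of the
deleted point gives at most `4n`, hence an average of at most `4n / i`. -/

lemma mem_canSq_iff {p : ℝ × ℝ} {k : ℕ} {i j : ℤ} :
    p ∈ canSq k i j ↔ ⌊p.1 * 2 ^ k⌋ = i ∧ ⌊p.2 * 2 ^ k⌋ = j := by
  have h : (0 : ℝ) < 2 ^ k := by positivity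
  simp only [canSq, Set.mem_prod, Set.mem_Ico, Int.floor_eq_iff, div_le_iff₀ h, lt_div_iff₀ h]

lemma canSq_inj {k k' : ℕ} {i j i' j' : ℤ} (h : canSq k i j = canSq k' i' j') :
    k = k' ∧ i = i' ∧ j = j' := by
  have hlt : ∀ (m : ℕ) (a : ℤ), (a : ℝ) / 2 ^ m < ((a : ℝ) + 1) / 2 ^ m := fun m a =>
    div_lt_div_of_pos_right (by linarith) (by positivity)
  obtain ⟨hx, hy⟩ := (Set.prod_eq_prod_iff_of_nonempty
    ((Set.nonempty_Ico.2 (hlt k i)).prod (Set.nonempty_Ico.2 (hlt k j)))).1 h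
  obtain ⟨e₁, e₂⟩ := (Set.Ico_eq_Ico_iff (Or.inl (hlt k i))).1 hx
  obtain ⟨e₃, -⟩ := (Set.Ico_eq_Ico_iff (Or.inl (hlt k j))).1 hy
  have hk : (2 : ℝ) ^ k' = 2 ^ k := by field_simp at e₁ e₂; linarith
  obtain rfl : k' = k := Nat.pow_right_injective le_rfl (by exact_mod_cast hk)
  field_simp at e₁ e₃
  exact ⟨rfl, by exact_mod_cast e₁, by exact_mod_cast e₃⟩

noncomputable def canSqAt (k : ℕ) (p : ℝ × ℝ) : Set (ℝ × ℝ) :=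
  canSq k ⌊p.1 * 2 ^ k⌋ ⌊p.2 * 2 ^ k⌋

lemma mem_canSqAt_iff {k : ℕ} {p q : ℝ × ℝ} :
    q ∈ canSqAt k p ↔ ⌊q.1 * 2 ^ k⌋ = ⌊p.1 * 2 ^ k⌋ ∧ ⌊q.2 * 2 ^ k⌋ = ⌊p.2 * 2 ^ k⌋ :=
  mem_canSq_iff

lemma mem_canSqAt_self (k : ℕ) (p : ℝ × ℝ) : p ∈ canSqAt k p :=
  mem_canSqAt_iff.2 ⟨rfl, rfl⟩

lemma floor_mul_two_pow_of_le (x : ℝ) {k k' : ℕ} (h : k ≤ k') :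
    ⌊x * 2 ^ k⌋ = ⌊x * 2 ^ k'⌋ / (2 ^ (k' - k) : ℕ) := by
  rw [← Int.floor_div_natCast]
  push_cast
  rw [mul_div_assoc, div_eq_of_eq_mul (by positivity) (by rw [← pow_add, Nat.add_sub_cancel' h])]

lemma canSqAt_anti {k k' : ℕ} (h : k ≤ k') (p : ℝ × ℝ) : canSqAt k' p ⊆ canSqAt k p := by
  intro q hq
  rw [mem_canSqAt_iff] at hq ⊢
  simp only [floor_mul_two_pow_of_le _ h, hq, and_self]

lemma canSqAt_eq_of_mem {k : ℕ} {p q : ℝ × ℝ} (h : q ∈ canSqAt k p) :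
    canSqAt k q = canSqAt k p := by
  obtain ⟨h₁, h₂⟩ := mem_canSqAt_iff.1 h
  simp only [canSqAt, h₁, h₂]

lemma floor_mul_two_pow_mem_Ico_iff {x : ℝ} {k : ℕ} :
    (0 ≤ ⌊x * 2 ^ k⌋ ∧ ⌊x * 2 ^ k⌋ < 2 ^ k) ↔ x ∈ Set.Ico 0 1 := by
  have h : (0 : ℝ) < 2 ^ k := by positivity
  rw [Int.floor_nonneg, Int.floor_lt, Set.mem_Ico]
  push_cast
  rw [mul_nonneg_iff_of_pos_right h, mul_lt_iff_lt_one_left h]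

lemma isCanSqSide_zero_unitSq : IsCanSqSide 0 unitSq :=
  ⟨0, 0, le_rfl, one_pos, le_rfl, one_pos, by simp [unitSq, canSq]⟩

lemma isCanSqSide_canSqAt {p : ℝ × ℝ} (hp : p ∈ unitSq) (k : ℕ) :
    IsCanSqSide k (canSqAt k p) := by
  obtain ⟨hi₀, hi⟩ := floor_mul_two_pow_mem_Ico_iff.2 hp.1
  obtain ⟨hj₀, hj⟩ := floor_mul_two_pow_mem_Ico_iff.2 hp.2
  exact ⟨_, _, hi₀, hi, hj₀, hj, rfl⟩

namespace IsCanSqSide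

variable {k k' : ℕ} {σ τ : Set (ℝ × ℝ)}

lemma eq_canSqAt (hσ : IsCanSqSide k σ) {p : ℝ × ℝ} (hp : p ∈ σ) : σ = canSqAt k p := by
  obtain ⟨i, j, -, -, -, -, rfl⟩ := hσ
  obtain ⟨rfl, rfl⟩ := mem_canSq_iff.1 hp
  rfl

lemma nonempty (hσ : IsCanSqSide k σ) : σ.Nonempty := by
  obtain ⟨i, j, -, -, -, -, rfl⟩ := hσ
  exact ⟨((i : ℝ) / 2 ^ k, (j : ℝ) / 2 ^ k), mem_canSq_iff.2 (by simp)⟩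

lemma subset_unitSq (hσ : IsCanSqSide k σ) : σ ⊆ unitSq := by
  obtain ⟨i, j, hi₀, hi, hj₀, hj, rfl⟩ := hσ
  intro q hq
  obtain ⟨rfl, rfl⟩ := mem_canSq_iff.1 hq
  exact ⟨floor_mul_two_pow_mem_Ico_iff.1 ⟨hi₀, hi⟩, floor_mul_two_pow_mem_Ico_iff.1 ⟨hj₀, hj⟩⟩

lemma unique (hσ : IsCanSqSide k σ) (hσ' : IsCanSqSide k' σ) : k = k' := by
  obtain ⟨i, j, -, -, -, -, rfl⟩ := hσ
  obtain ⟨i', j', -, -, -, -, e⟩ := hσ'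
  exact (canSq_inj e).1

lemma subset_of_le (hσ : IsCanSqSide k σ) (hτ : IsCanSqSide k' τ) (hk : k ≤ k')
    (h : (σ ∩ τ).Nonempty) : τ ⊆ σ := by
  obtain ⟨p, hpσ, hpτ⟩ := h
  rw [hσ.eq_canSqAt hpσ, hτ.eq_canSqAt hpτ]
  exact canSqAt_anti hk p

end IsCanSqSide

lemma IsCanSq.subset_unitSq {σ : Set (ℝ × ℝ)} (hσ : IsCanSq σ) : σ ⊆ unitSq :=
  hσ.choose_spec.subset_unitSq

lemma IsCanSq.subset_or_subset {σ τ : Set (ℝ × ℝ)} (hσ : IsCanSq σ) (hτ : IsCanSq τ)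
    (h : (σ ∩ τ).Nonempty) : σ ⊆ τ ∨ τ ⊆ σ := by
  obtain ⟨k, hσ⟩ := hσ
  obtain ⟨l, hτ⟩ := hτ
  rcases le_total k l with hkl | hlk
  · exact Or.inr (hσ.subset_of_le hτ hkl h)
  · exact Or.inl (hτ.subset_of_le hσ hlk (Set.inter_comm σ τ ▸ h))

lemma finite_setOf_isCanSqSide (k : ℕ) : {σ | IsCanSqSide k σ}.Finite := by
  refine ((Set.finite_Ico (0 : ℤ) (2 ^ k)).prod (Set.finite_Ico (0 : ℤ) (2 ^ k))).image
    (fun ij => canSq k ij.1 ij.2) |>.subset ?_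
  rintro σ ⟨i, j, hi₀, hi, hj₀, hj, rfl⟩
  exact ⟨(i, j), ⟨⟨hi₀, hi⟩, hj₀, hj⟩, rfl⟩

lemma exists_notMem_canSqAt {a b : ℝ × ℝ} (hab : a ≠ b) : ∃ k, b ∉ canSqAt k a := by
  have separate : ∀ x y : ℝ, x ≠ y → ∃ k : ℕ, ⌊y * 2 ^ k⌋ ≠ ⌊x * 2 ^ k⌋ := by
    intro x y hxy
    have hd : 0 < |y - x| := abs_pos.2 (sub_ne_zero.2 hxy.symm)
    obtain ⟨k, hk⟩ := pow_unbounded_of_one_lt (|y - x|⁻¹) one_lt_two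
    refine ⟨k, fun h => ?_⟩
    have h₁ := Int.abs_sub_lt_one_of_floor_eq_floor h
    rw [← sub_mul, abs_mul, abs_of_pos (by positivity : (0 : ℝ) < 2 ^ k)] at h₁
    rw [inv_lt_iff_one_lt_mul₀ hd] at hk
    linarith
  rcases not_and_or.1 (Prod.ext_iff.not.1 hab) with h | h
  · obtain ⟨k, hk⟩ := separate _ _ h
    exact ⟨k, fun hb => hk (mem_canSqAt_iff.1 hb).1⟩
  · obtain ⟨k, hk⟩ := separate _ _ h
    exact ⟨k, fun hb => hk (mem_canSqAt_iff.1 hb).2⟩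

namespace IsQuadrantOf

variable {q σ : Set (ℝ × ℝ)} {k : ℕ}

lemma isCanSqSide (hq : IsQuadrantOf q σ) (hσ : IsCanSqSide k σ) : IsCanSqSide (k + 1) q := by
  obtain ⟨k', hσ', hq', -⟩ := hq
  rwa [hσ.unique hσ']

lemma subset (hq : IsQuadrantOf q σ) : q ⊆ σ := by
  obtain ⟨-, -, -, h⟩ := hq
  exact h

lemma eq_canSqAt (hq : IsQuadrantOf q σ) (hσ : IsCanSqSide k σ) {p : ℝ × ℝ} (hp : p ∈ q) :
    q = canSqAt (k + 1) p :=
  (hq.isCanSqSide hσ).eq_canSqAt hp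

lemma subset_of_ssubset (hq : IsQuadrantOf q σ) {τ : Set (ℝ × ℝ)} (hτ : IsCanSq τ)
    (h : q ⊂ τ) : σ ⊆ τ := by
  obtain ⟨k, hσ, hqk, hqσ⟩ := hq
  obtain ⟨l, hτ⟩ := hτ
  obtain ⟨p, hp⟩ := hqk.nonempty
  have hl : l ≤ k := by
    by_contra! hkl
    exact h.2 (hqk.subset_of_le hτ hkl ⟨p, hp, h.1 hp⟩)
  exact hτ.subset_of_le hσ hl ⟨p, h.1 hp, hqσ hp⟩

end IsQuadrantOf

lemma finite_setOf_isQuadrantOf (σ : Set (ℝ × ℝ)) : {q | IsQuadrantOf q σ}.Finite := by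
  by_cases h : IsCanSq σ
  · obtain ⟨k, hσ⟩ := h
    exact (finite_setOf_isCanSqSide (k + 1)).subset fun q hq => hq.isCanSqSide hσ
  · exact Set.finite_empty.subset fun q ⟨k, hσ, _⟩ => h ⟨k, hσ⟩

namespace IsSmallestCanSq

variable {S σ : Set (ℝ × ℝ)}

lemma smallestCanSq_eq (h : IsSmallestCanSq S σ) : smallestCanSq S = σ := by
  have hex : ∃ τ, IsSmallestCanSq S τ := ⟨σ, h⟩
  rw [smallestCanSq, dif_pos hex]
  exact (hex.choose_spec.2.2 σ h.1 h.2.1).antisymm (h.2.2 _ hex.choose_spec.1 hex.choose_spec.2.1)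

lemma exists_canSqAt_ne (hs : IsSmallestCanSq S σ) {k : ℕ} (hσ : IsCanSqSide k σ)
    (hS : S.Nonempty) : ∃ a ∈ S, ∃ b ∈ S, canSqAt (k + 1) a ≠ canSqAt (k + 1) b := by
  obtain ⟨a, ha⟩ := hS
  by_contra! h
  have haU : a ∈ unitSq := hσ.subset_unitSq (hs.2.1 ha)
  have hsub : σ ⊆ canSqAt (k + 1) a := hs.2.2 _ ⟨k + 1, isCanSqSide_canSqAt haU _⟩ fun b hb => by
    rw [h a ha b hb]; exact mem_canSqAt_self _ b
  have heq : σ = canSqAt (k + 1) a :=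
    hsub.antisymm (hσ.eq_canSqAt (hs.2.1 ha) ▸ canSqAt_anti k.le_succ a)
  exact absurd (hσ.unique (heq ▸ isCanSqSide_canSqAt haU (k + 1))) (by omega)

end IsSmallestCanSq

lemma isSmallestCanSq_of_canSqAt_ne {T σ : Set (ℝ × ℝ)} {k : ℕ} (hσ : IsCanSqSide k σ)
    (hT : T ⊆ σ) {a b : ℝ × ℝ} (ha : a ∈ T) (hb : b ∈ T)
    (hab : canSqAt (k + 1) a ≠ canSqAt (k + 1) b) : IsSmallestCanSq T σ := by
  refine ⟨⟨k, hσ⟩, hT, ?_⟩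
  rintro τ ⟨l, hτ⟩ hTτ
  rcases le_or_gt l k with hl | hl
  · exact hτ.subset_of_le hσ hl ⟨a, hTτ ha, hT ha⟩
  · have hbτ := hTτ hb
    rw [hτ.eq_canSqAt (hTτ ha)] at hbτ
    exact absurd (canSqAt_eq_of_mem (canSqAt_anti hl a hbτ)).symm hab

lemma exists_isSmallestCanSq {S : Set (ℝ × ℝ)} (hSU : S ⊆ unitSq) {a b : ℝ × ℝ}
    (ha : a ∈ S) (hb : b ∈ S) (hab : a ≠ b) : ∃ σ, IsSmallestCanSq S σ := by
  have hex : ∃ k, ¬ S ⊆ canSqAt k a :=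
    (exists_notMem_canSqAt hab).imp fun k hk hS => hk (hS hb)
  have hpos : Nat.find hex ≠ 0 := fun h0 => Nat.find_spec hex <| by
    rwa [h0, ← isCanSqSide_zero_unitSq.eq_canSqAt (hSU ha)]
  have hS : S ⊆ canSqAt (Nat.find hex - 1) a := not_not.1 (Nat.find_min hex (by omega))
  refine ⟨_, ⟨_, isCanSqSide_canSqAt (hSU ha) _⟩, hS, ?_⟩
  rintro τ ⟨l, hτ⟩ hSτ
  obtain rfl := hτ.eq_canSqAt (hSτ ha)
  have hl : l < Nat.find hex :=
    lt_of_not_ge fun hl => Nat.find_spec hex (hSτ.trans (canSqAt_anti hl a))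
  exact canSqAt_anti (by omega) a

lemma isSmallestCanSq_smallestCanSq {S : Set (ℝ × ℝ)} (hS : S.Finite) (hSU : S ⊆ unitSq)
    (h : 2 ≤ S.ncard) : IsSmallestCanSq S (smallestCanSq S) := by
  obtain ⟨a, b, ha, hb, hab⟩ := (Set.one_lt_ncard_iff hS).1 h
  obtain ⟨σ, hσ⟩ := exists_isSmallestCanSq hSU ha hb hab
  rwa [hσ.smallestCanSq_eq]

section Counting

variable {α : Type*}

def HasDefiningSet (c : ℕ) (S : Set α) (Q : Set α → Prop) : Prop :=
  ∃ W : Finset α, W.card ≤ c ∧ ↑W ⊆ S ∧ ∀ T, ↑W ⊆ T → T ⊆ S → Q T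

variable {c c₁ c₂ : ℕ} {S : Set α} {Q Q₁ Q₂ : Set α → Prop}

lemma HasDefiningSet.mono {Q' : Set α → Prop} (h : HasDefiningSet c S Q)
    (hQ : ∀ T ⊆ S, Q T → Q' T) : HasDefiningSet c S Q' := by
  obtain ⟨W, hc, hWS, hW⟩ := h
  exact ⟨W, hc, hWS, fun T hWT hTS => hQ T hTS (hW T hWT hTS)⟩

lemma HasDefiningSet.and [DecidableEq α] (h₁ : HasDefiningSet c₁ S Q₁)
    (h₂ : HasDefiningSet c₂ S Q₂) : HasDefiningSet (c₁ + c₂) S fun T => Q₁ T ∧ Q₂ T := by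
  obtain ⟨W₁, hc₁, hW₁S, hW₁⟩ := h₁
  obtain ⟨W₂, hc₂, hW₂S, hW₂⟩ := h₂
  refine ⟨W₁ ∪ W₂, (Finset.card_union_le _ _).trans (add_le_add hc₁ hc₂), ?_, fun T hWT hTS => ?_⟩
  · rw [Finset.coe_union]
    exact Set.union_subset hW₁S hW₂S
  · rw [Finset.coe_union, Set.union_subset_iff] at hWT
    exact ⟨hW₁ T hWT.1 hTS, hW₂ T hWT.2 hTS⟩

/-- Only the at most `c` points of a defining set can destroy `Q` when deleted from `S`. -/
lemma HasDefiningSet.card_filter_not_sdiff_le (h : HasDefiningSet c S Q) (A : Finset α) :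
    (A.filter fun p => ¬ Q (S \ {p})).card ≤ c := by
  obtain ⟨W, hc, hWS, hW⟩ := h
  refine (Finset.card_le_card fun p hp => ?_).trans hc
  by_contra hpW
  refine (Finset.mem_filter.1 hp).2 (hW _ (fun x hx => ⟨hWS hx, ?_⟩) Set.sdiff_subset)
  rintro rfl
  exact hpW hx

lemma finsum_mem_ncard_inter_le (P : Finset α) {F : Set (Set α)} (hF : F.Finite)
    (hd : F.PairwiseDisjoint id) : ∑ᶠ f ∈ F, ((P : Set α) ∩ f).ncard ≤ P.card := by
  have hcard : ∀ f : Set α, ((P : Set α) ∩ f).ncard = (P.filter (· ∈ f)).card := fun f => by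
    rw [← Set.ncard_coe_finset, Finset.coe_filter]
    rfl
  rw [finsum_mem_eq_finite_toFinset_sum _ hF]
  simp_rw [hcard]
  rw [← Finset.card_biUnion (t := fun f => P.filter (· ∈ f)) fun f hf g hg hfg =>
    Finset.disjoint_filter.2 fun x _ hxf hxg =>
      Set.disjoint_left.1 (hd (by simpa using hf) (by simpa using hg) hfg) hxf hxg]
  exact Finset.card_le_card (Finset.biUnion_subset.2 fun f _ => Finset.filter_subset _ _)

lemma sum_finsum_mem_sdiff_le {ι β : Type*} (A : Finset ι) {F : Set β} (hF : F.Finite)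
    (G : ι → Set β) (w : β → ℕ) {c : ℕ} (h : ∀ f ∈ F, (A.filter fun p => f ∉ G p).card ≤ c) :
    ∑ p ∈ A, ∑ᶠ f ∈ F \ G p, w f ≤ c * ∑ᶠ f ∈ F, w f := by
  rw [finsum_mem_eq_finite_toFinset_sum _ hF, Finset.mul_sum]
  calc ∑ p ∈ A, ∑ᶠ f ∈ F \ G p, w f
      = ∑ p ∈ A, ∑ f ∈ hF.toFinset, if f ∉ G p then w f else 0 := by
        refine Finset.sum_congr rfl fun p _ => ?_
        rw [finsum_mem_eq_finite_toFinset_sum _ (hF.subset Set.sdiff_subset), ← Finset.sum_filter]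
        congr 1
        ext
        simp
    _ = ∑ f ∈ hF.toFinset, (A.filter fun p => f ∉ G p).card * w f := by
        rw [Finset.sum_comm]
        refine Finset.sum_congr rfl fun f _ => ?_
        rw [← Finset.sum_filter, Finset.sum_const, smul_eq_mul]
    _ ≤ ∑ f ∈ hF.toFinset, c * w f :=
        Finset.sum_le_sum fun f hf => Nat.mul_le_mul_right _ (h f (by simpa using hf))

end Counting

namespace Critical

variable {S σ : Set (ℝ × ℝ)}

lemma exists_canSqAt_ne (hc : Critical S σ) {k : ℕ} (hσ : IsCanSqSide k σ) :
    ∃ a ∈ S ∩ σ, ∃ b ∈ S ∩ σ, canSqAt (k + 1) a ≠ canSqAt (k + 1) b := by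
  obtain ⟨-, q₁, q₂, hq₁, hq₂, hne, ⟨a, haS, ha⟩, ⟨b, hbS, hb⟩⟩ := hc
  refine ⟨a, ⟨haS, hq₁.subset ha⟩, b, ⟨hbS, hq₂.subset hb⟩, ?_⟩
  rwa [← hq₁.eq_canSqAt hσ ha, ← hq₂.eq_canSqAt hσ hb]

lemma isSmallestCanSq_inter (hc : Critical S σ) : IsSmallestCanSq (S ∩ σ) σ := by
  obtain ⟨k, hσ⟩ := hc.1
  obtain ⟨a, ha, b, hb, hab⟩ := hc.exists_canSqAt_ne hσ
  exact isSmallestCanSq_of_canSqAt_ne hσ Set.inter_subset_right ha hb hab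

lemma two_le_ncard_inter (hc : Critical S σ) (hS : S.Finite) : 2 ≤ (S ∩ σ).ncard := by
  obtain ⟨k, hσ⟩ := hc.1
  obtain ⟨a, ha, b, hb, hab⟩ := hc.exists_canSqAt_ne hσ
  exact (Set.one_lt_ncard_iff (hS.inter_of_left σ)).2 ⟨a, b, ha, hb, fun h => hab (h ▸ rfl)⟩

lemma hasDefiningSet (hc : Critical S σ) : HasDefiningSet 2 S (Critical · σ) := by
  obtain ⟨hσ, q₁, q₂, hq₁, hq₂, hne, ⟨a, haS, ha⟩, ⟨b, hbS, hb⟩⟩ := hc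
  refine ⟨{a, b}, Finset.card_le_two, ?_, fun T hT _ => ?_⟩ <;>
    simp only [Finset.coe_insert, Finset.coe_singleton, Set.insert_subset_iff,
      Set.singleton_subset_iff] at *
  · exact ⟨haS, hbS⟩
  · exact ⟨hσ, q₁, q₂, hq₁, hq₂, hne, ⟨a, hT.1, ha⟩, ⟨b, hT.2, hb⟩⟩

end Critical

lemma finite_setOf_critical {S : Set (ℝ × ℝ)} (hS : S.Finite) : {σ | Critical S σ}.Finite :=
  (hS.finite_subsets.image smallestCanSq).subset fun σ hc =>
    ⟨S ∩ σ, Set.inter_subset_left, hc.isSmallestCanSq_inter.smallestCanSq_eq⟩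

section QuadtreeMap

/-- Cases (i) and (ii) of `QT` are the tile in the cell `unitSq`, case (iii) the tiles in the
quadrants of critical squares. -/
def IsQTCell (S q : Set (ℝ × ℝ)) : Prop :=
  q = unitSq ∨ ∃ σ, Critical S σ ∧ IsQuadrantOf q σ

def IsQuadTile (S q f : Set (ℝ × ℝ)) : Prop :=
  ((S ∩ q).ncard ≤ 1 ∧ f = q) ∨
    (2 ≤ (S ∩ q).ncard ∧ smallestCanSq (S ∩ q) ≠ q ∧ f = q \ smallestCanSq (S ∩ q))

variable {S q f : Set (ℝ × ℝ)}

lemma mem_QT_iff (hSU : S ⊆ unitSq) : f ∈ QT S ↔ ∃ q, IsQTCell S q ∧ IsQuadTile S q f := by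
  have root : IsQuadTile S unitSq f ↔ (S.ncard ≤ 1 ∧ f = unitSq) ∨
      (2 ≤ S.ncard ∧ smallestCanSq S ≠ unitSq ∧ f = unitSq \ smallestCanSq S) := by
    rw [IsQuadTile, Set.inter_eq_left.2 hSU]
  change _ ∨ _ ∨ _ ↔ _
  rw [← or_assoc, ← root]
  constructor
  · rintro (h | ⟨σ, q, hc, hq, h⟩)
    exacts [⟨unitSq, Or.inl rfl, h⟩, ⟨q, Or.inr ⟨σ, hc, hq⟩, h⟩]
  · rintro ⟨q, rfl | ⟨σ, hc, hq⟩, h⟩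
    exacts [Or.inl h, Or.inr ⟨σ, q, hc, hq, h⟩]

lemma IsQTCell.isCanSq (hq : IsQTCell S q) : IsCanSq q := by
  rcases hq with rfl | ⟨σ, -, k, -, hq, -⟩
  exacts [⟨0, isCanSqSide_zero_unitSq⟩, ⟨k + 1, hq⟩]

lemma IsQTCell.hasDefiningSet (hq : IsQTCell S q) : HasDefiningSet 2 S (IsQTCell · q) := by
  rcases hq with rfl | ⟨σ, hc, hqσ⟩
  · exact ⟨∅, by simp, by simp, fun _ _ _ => Or.inl rfl⟩
  · exact hc.hasDefiningSet.mono fun T _ hT => Or.inr ⟨σ, hT, hqσ⟩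

lemma finite_setOf_isQTCell (hS : S.Finite) : {q | IsQTCell S q}.Finite := by
  refine (((finite_setOf_critical hS).biUnion fun σ _ => finite_setOf_isQuadrantOf σ).insert
    unitSq).subset ?_
  rintro q (rfl | ⟨σ, hc, hqσ⟩)
  exacts [Set.mem_insert _ _, Set.mem_insert_of_mem _ (Set.mem_biUnion hc hqσ)]

namespace IsQuadTile

lemma subset (hf : IsQuadTile S q f) : f ⊆ q := by
  rcases hf with ⟨-, rfl⟩ | ⟨-, -, rfl⟩
  exacts [subset_rfl, Set.sdiff_subset]

lemma eq {g : Set (ℝ × ℝ)} (hf : IsQuadTile S q f) (hg : IsQuadTile S q g) : f = g := by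
  rcases hf with ⟨h, rfl⟩ | ⟨h, -, rfl⟩ <;> rcases hg with ⟨h', rfl⟩ | ⟨h', -, rfl⟩ <;>
    first | rfl | omega

lemma disjoint_of_critical (hS : S.Finite) (hq : IsCanSq q) (hf : IsQuadTile S q f)
    {σ : Set (ℝ × ℝ)} (hc : Critical S σ) (hσq : σ ⊆ q) : Disjoint f σ := by
  have hσq' : S ∩ σ ⊆ S ∩ q := Set.inter_subset_inter_right S hσq
  have h2 : 2 ≤ (S ∩ q).ncard :=
    (hc.two_le_ncard_inter hS).trans (Set.ncard_le_ncard hσq' (hS.inter_of_left q))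
  obtain ⟨h1, -⟩ | ⟨-, -, rfl⟩ := hf
  · omega
  have hsq := isSmallestCanSq_smallestCanSq (hS.inter_of_left q)
    (Set.inter_subset_right.trans hq.subset_unitSq) h2
  exact Set.disjoint_sdiff_left.mono_right
    (hc.isSmallestCanSq_inter.2.2 _ hsq.1 (hσq'.trans hsq.2.1))

lemma disjoint_of_ssubset (hS : S.Finite) (hq : IsCanSq q) (hf : IsQuadTile S q f)
    {q' g : Set (ℝ × ℝ)} (hq' : IsQTCell S q') (hg : g ⊆ q') (h : q' ⊂ q) : Disjoint f g := by
  obtain ⟨σ, hc, hq'σ⟩ := hq'.resolve_left fun e => h.2 (e ▸ hq.subset_unitSq)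
  exact (hf.disjoint_of_critical hS hq hc (hq'σ.subset_of_ssubset hq h)).mono_right
    (hg.trans hq'σ.subset)

lemma hasDefiningSet (hS : S.Finite) (hq : q ⊆ unitSq) (hf : IsQuadTile S q f) :
    HasDefiningSet 2 S (IsQuadTile · q f) := by
  rcases hf with ⟨h1, rfl⟩ | ⟨h2, hne, rfl⟩
  · refine ⟨∅, by simp, by simp, fun T _ hTS => Or.inl ⟨?_, rfl⟩⟩
    exact (Set.ncard_le_ncard (Set.inter_subset_inter_left _ hTS) (hS.inter_of_left _)).trans h1
  have hsq :=
    isSmallestCanSq_smallestCanSq (hS.inter_of_left q) (Set.inter_subset_right.trans hq) h2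
  obtain ⟨k, hk⟩ := hsq.1
  obtain ⟨a, ha, b, hb, hab⟩ := hsq.exists_canSqAt_ne hk (Set.nonempty_of_ncard_ne_zero (by omega))
  refine ⟨{a, b}, Finset.card_le_two, ?_, fun T hW hTS => Or.inr ?_⟩ <;>
    simp only [Finset.coe_insert, Finset.coe_singleton, Set.insert_subset_iff,
      Set.singleton_subset_iff] at *
  · exact ⟨ha.1, hb.1⟩
  have haT : a ∈ T ∩ q := ⟨hW.1, ha.2⟩
  have hbT : b ∈ T ∩ q := ⟨hW.2, hb.2⟩
  have hsq' : IsSmallestCanSq (T ∩ q) (smallestCanSq (S ∩ q)) := isSmallestCanSq_of_canSqAt_ne hk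
    ((Set.inter_subset_inter_left q hTS).trans hsq.2.1) haT hbT hab
  rw [hsq'.smallestCanSq_eq]
  exact ⟨(Set.one_lt_ncard_iff ((hS.subset hTS).inter_of_left q)).2
    ⟨a, b, haT, hbT, fun h => hab (h ▸ rfl)⟩, hne, rfl⟩

lemma mem_pair (hf : IsQuadTile S q f) :
    f ∈ ({q, q \ smallestCanSq (S ∩ q)} : Set (Set (ℝ × ℝ))) := by
  rcases hf with ⟨-, rfl⟩ | ⟨-, -, rfl⟩
  exacts [Set.mem_insert _ _, Set.mem_insert_of_mem _ rfl]

end IsQuadTile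

lemma QT_finite (hS : S.Finite) (hSU : S ⊆ unitSq) : (QT S).Finite := by
  refine ((finite_setOf_isQTCell hS).biUnion fun q _ =>
    Set.toFinite {q, q \ smallestCanSq (S ∩ q)}).subset fun f hf => ?_
  obtain ⟨q, hq, hqf⟩ := (mem_QT_iff hSU).1 hf
  exact Set.mem_biUnion hq hqf.mem_pair

lemma pairwiseDisjoint_QT (hS : S.Finite) (hSU : S ⊆ unitSq) : (QT S).PairwiseDisjoint id := by
  intro f hf g hg hfg
  obtain ⟨q, hq, hqf⟩ := (mem_QT_iff hSU).1 hf
  obtain ⟨q', hq', hq'g⟩ := (mem_QT_iff hSU).1 hg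
  rcases Set.eq_empty_or_nonempty (q ∩ q') with h | h
  · exact (Set.disjoint_iff_inter_eq_empty.2 h).mono hqf.subset hq'g.subset
  obtain rfl | hne := eq_or_ne q q'
  · exact absurd (hqf.eq hq'g) hfg
  rcases hq.isCanSq.subset_or_subset hq'.isCanSq h with hsub | hsub
  · exact (hq'g.disjoint_of_ssubset hS hq'.isCanSq hq hqf.subset (hsub.ssubset_of_ne hne)).symm
  · exact hqf.disjoint_of_ssubset hS hq.isCanSq hq' hq'g.subset (hsub.ssubset_of_ne hne.symm)

lemma hasDefiningSet_mem_QT (hS : S.Finite) (hSU : S ⊆ unitSq) (hf : f ∈ QT S) :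
    HasDefiningSet 4 S (f ∈ QT ·) := by
  obtain ⟨q, hq, hqf⟩ := (mem_QT_iff hSU).1 hf
  exact (hq.hasDefiningSet.and (hqf.hasDefiningSet hS hq.isCanSq.subset_unitSq)).mono
    fun T hTS h => (mem_QT_iff (hTS.trans hSU)).2 ⟨q, h⟩

theorem sum_finsum_QT_sdiff_le (P : Finset (ℝ × ℝ)) (hS : S.Finite) (hSU : S ⊆ unitSq)
    (A : Finset (ℝ × ℝ)) :
    ∑ p ∈ A, ∑ᶠ f ∈ QT S \ QT (S \ {p}), ((P : Set (ℝ × ℝ)) ∩ f).ncard ≤ 4 * P.card :=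
  (sum_finsum_mem_sdiff_le A (QT_finite hS hSU) _ _ fun _ hf =>
    (hasDefiningSet_mem_QT hS hSU hf).card_filter_not_sdiff_le A).trans
  (Nat.mul_le_mul_left 4
    (finsum_mem_ncard_inter_le P (QT_finite hS hSU) (pairwiseDisjoint_QT hS hSU)))

end QuadtreeMap

section RandomOrder

variable {n : ℕ} {P : Finset (ℝ × ℝ)}

lemma prefixSet_subset (π : Fin n ≃ {x // x ∈ P}) (j : ℕ) : prefixSet n P π j ⊆ P := by
  rintro x ⟨t, -, rfl⟩
  exact (π t).2

lemma prefixSet_sub_one (π : Fin n ≃ {x // x ∈ P}) {i : ℕ} (hi : 1 ≤ i) (hin : i ≤ n) :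
    prefixSet n P π (i - 1) = prefixSet n P π i \ {(π ⟨i - 1, by omega⟩ : ℝ × ℝ)} := by
  ext x
  simp only [prefixSet, Set.mem_sdiff, Set.mem_ofPred_eq, Set.mem_singleton_iff]
  constructor
  · rintro ⟨t, ht, rfl⟩
    refine ⟨⟨t, by omega, rfl⟩, fun h => ?_⟩
    have : (t : ℕ) = i - 1 := congrArg Fin.val (π.injective (Subtype.ext h))
    omega
  · rintro ⟨⟨t, ht, rfl⟩, hne⟩
    refine ⟨t, ?_, rfl⟩
    have : (t : ℕ) ≠ i - 1 := fun h => hne (by rw [show t = ⟨i - 1, by omega⟩ from Fin.ext h])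
    omega

lemma prefixSet_perm_trans (π : Fin n ≃ {x // x ∈ P}) (s : Equiv.Perm (Fin n)) {j : ℕ}
    (hs : ∀ t, (s t : ℕ) < j ↔ (t : ℕ) < j) : prefixSet n P (s.trans π) j = prefixSet n P π j := by
  ext x
  constructor
  · rintro ⟨t, ht, rfl⟩
    exact ⟨s t, (hs t).2 ht, rfl⟩
  · rintro ⟨t, ht, rfl⟩
    exact ⟨s.symm t, (hs _).1 (by simpa using ht), by simp⟩

/-- Backwards analysis: in a uniformly random order, the `i`-th point is equally likely to be
any of the first `i` points, and the set of the first `i` points does not see which one. -/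
theorem mul_sum_prefixSet_last_le (g : Set (ℝ × ℝ) → ℝ × ℝ → ℕ) {i : ℕ} (hi : 1 ≤ i)
    (hin : i ≤ n) {B : ℕ} (hB : ∀ π : Fin n ≃ {x // x ∈ P},
      ∑ p ∈ (Finset.univ.filter fun t : Fin n => (t : ℕ) < i).image (fun t => (π t : ℝ × ℝ)),
        g (prefixSet n P π i) p ≤ B) :
    i * ∑ π : Fin n ≃ {x // x ∈ P}, g (prefixSet n P π i) (π ⟨i - 1, by omega⟩)
      ≤ Fintype.card (Fin n ≃ {x // x ∈ P}) * B := by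
  set T := Finset.univ.filter fun t : Fin n => (t : ℕ) < i
  set m : Fin n := ⟨i - 1, by omega⟩
  have hT : T.card = i := by rw [Fin.card_filter_val_lt, min_eq_right hin]
  have hswap : ∀ t ∈ T, ∑ π : Fin n ≃ {x // x ∈ P}, g (prefixSet n P π i) (π t)
      = ∑ π : Fin n ≃ {x // x ∈ P}, g (prefixSet n P π i) (π m) := by
    intro t ht
    have ht : (t : ℕ) < i := (Finset.mem_filter.1 ht).2
    refine Fintype.sum_equiv ((Equiv.swap t m).equivCongr (Equiv.refl _)) _ _ fun π => ?_
    have hm : (m : ℕ) < i := by simp only [m]; omega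
    have hs : ∀ u, ((Equiv.swap t m u : Fin n) : ℕ) < i ↔ (u : ℕ) < i := fun u => by
      rw [Equiv.swap_apply_def]
      split_ifs with h₁ h₂
      exacts [h₁ ▸ iff_of_true hm ht, h₂ ▸ iff_of_true ht hm, Iff.rfl]
    have he : (Equiv.swap t m).equivCongr (Equiv.refl _) π = (Equiv.swap t m).trans π :=
      Equiv.ext fun _ => rfl
    rw [he, prefixSet_perm_trans π _ hs, Equiv.trans_apply, Equiv.swap_apply_right]
  calc i * ∑ π : Fin n ≃ {x // x ∈ P}, g (prefixSet n P π i) (π m)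
      = ∑ t ∈ T, ∑ π : Fin n ≃ {x // x ∈ P}, g (prefixSet n P π i) (π t) := by
        rw [Finset.sum_congr rfl hswap, Finset.sum_const, hT, smul_eq_mul]
    _ = ∑ π : Fin n ≃ {x // x ∈ P}, ∑ t ∈ T, g (prefixSet n P π i) (π t) := Finset.sum_comm
    _ ≤ ∑ _π : Fin n ≃ {x // x ∈ P}, B := Finset.sum_le_sum fun π _ =>
        (Finset.sum_image fun _ _ _ _ h => π.injective (Subtype.ext h)).symm.trans_le (hB π)
    _ = Fintype.card (Fin n ≃ {x // x ∈ P}) * B := by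
        rw [Finset.sum_const, Finset.card_univ, smul_eq_mul]

end RandomOrder

/-- Expected work in the `i`-th iteration: for a uniformly random bijection
`π : {1, …, n} → P` and `P_j = {π(1), …, π(j)}`, the expected value of the sum,
over all tiles `f ∈ QT(P_i) \ QT(P_{i-1})`, of `|P ∩ f|`, is at most `4n / i`. -/
theorem expected_work_iteration (n : ℕ) (P : Finset (ℝ × ℝ)) (hcard : P.card = n)
    (hPU : ∀ x ∈ P, x ∈ unitSq) (i : ℕ) (hi1 : 1 ≤ i) (hin : i ≤ n) :
    (∑ π : Fin n ≃ {x // x ∈ P},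
        ((∑ᶠ f ∈ QT (prefixSet n P π i) \ QT (prefixSet n P π (i - 1)),
            ((P : Set (ℝ × ℝ)) ∩ f).ncard : ℕ) : ℝ))
        / ((Fintype.card (Fin n ≃ {x // x ∈ P})) : ℝ)
      ≤ 4 * (n : ℝ) / (i : ℝ) := by
  have hN : 0 < Fintype.card (Fin n ≃ {x // x ∈ P}) :=
    Fintype.card_pos_iff.2 ⟨(Fintype.equivFinOfCardEq (by simpa using hcard)).symm⟩
  have hwork := mul_sum_prefixSet_last_le (P := P) (B := 4 * n)
    (fun S p => ∑ᶠ f ∈ QT S \ QT (S \ {p}), ((P : Set (ℝ × ℝ)) ∩ f).ncard) hi1 hin fun π => by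
      have hS := prefixSet_subset π i
      exact (sum_finsum_QT_sdiff_le P (P.finite_toSet.subset hS) (hS.trans hPU) _).trans_eq
        (congrArg _ hcard)
  simp_rw [prefixSet_sub_one _ hi1 hin]
  rw [div_le_div_iff₀ (by exact_mod_cast hN) (by exact_mod_cast hi1), mul_comm, mul_comm (4 * _)]
  exact_mod_cast hwork
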